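/- Let G : G₁ → G₀ and H : H₁ → H₀ be isoclinic finite crossed modules (all four groups G₁, G₀, H₁, H₀ are finite). Then G₁ is isoclinic to H₁ and G₀ is isoclinic to H₀ as groups. -/

import Mathlib

open scoped commutatorElement

/-- A crossed module `d : G₁ → G₀` with action `act : G₀ → Aut(G₁)`. -/
structure XMod (G₁ G₀ : Type*) [Group G₁] [Group G₀] where
  d : G₁ →* G₀
  act : G₀ →* MulAut G₁
  cm1 : ∀ (g₀ : G₀) (g₁ : G₁), d (act g₀ g₁) = g₀ * d g₁ * g₀⁻¹
  cm2 : ∀ (g₁ g₁' : G₁), act (d g₁) g₁' = g₁ * g₁' * g₁⁻¹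

/-- The commutator `⁅x, y⁆` lies in the commutator subgroup. -/
lemma mem_commutator_of {G : Type*} [Group G] (x y : G) : ⁅x, y⁆ ∈ commutator G := by
  rw [commutator_def]
  exact Subgroup.commutator_mem_commutator (Subgroup.mem_top x) (Subgroup.mem_top y)

namespace XMod

variable {G₁ G₀ : Type*} [Group G₁] [Group G₀] (X : XMod G₁ G₀)

lemma act_act (a b : G₀) (x : G₁) : X.act a (X.act b x) = X.act (a * b) x := by
  rw [map_mul]; rfl

lemma act_one (x : G₁) : X.act 1 x = x := by rw [map_one]; rfl

/-- The fixed-point subgroup `G₁^{G₀}`. -/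
def fix : Subgroup G₁ where
  carrier := {g₁ | ∀ g₀ : G₀, X.act g₀ g₁ = g₁}
  one_mem' := fun g₀ => map_one (X.act g₀)
  mul_mem' := fun {a b} ha hb g₀ => by rw [map_mul, ha g₀, hb g₀]
  inv_mem' := fun {a} ha g₀ => by rw [map_inv, ha g₀]

lemma mem_fix {g₁ : G₁} : g₁ ∈ X.fix ↔ ∀ g₀ : G₀, X.act g₀ g₁ = g₁ := Iff.rfl

/-- The stabilizer `St_{G₀}(G₁)`. -/
def stab : Subgroup G₀ where
  carrier := {g₀ | ∀ g₁ : G₁, X.act g₀ g₁ = g₁}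
  one_mem' := fun g₁ => X.act_one g₁
  mul_mem' := fun {a b} ha hb g₁ => by rw [← X.act_act, hb g₁, ha g₁]
  inv_mem' := fun {a} ha g₁ => by
    have h := X.act_act a⁻¹ a g₁
    rw [ha g₁] at h
    simpa [X.act_one] using h

lemma mem_stab {g₀ : G₀} : g₀ ∈ X.stab ↔ ∀ g₁ : G₁, X.act g₀ g₁ = g₁ := Iff.rfl

/-- `St_{G₀}(G₁) ∩ Z(G₀)`. -/
def zstab : Subgroup G₀ := X.stab ⊓ Subgroup.center G₀

lemma fix_le_center : X.fix ≤ Subgroup.center G₁ := fun h hh =>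
  Subgroup.mem_center_iff.mpr fun g => by
    have h1 := X.cm2 g h
    rw [hh (X.d g)] at h1
    exact mul_inv_eq_iff_eq_mul.mp h1.symm

instance fix_normal : (X.fix).Normal := ⟨fun n hn g => by
  rw [Subgroup.mem_center_iff.mp (X.fix_le_center hn) g]
  simpa using hn⟩

instance zstab_normal : (X.zstab).Normal := ⟨fun n hn g => by
  rw [Subgroup.mem_center_iff.mp (Subgroup.mem_inf.mp hn).2 g]
  simpa using hn⟩

/-- The displacement subgroup `D_{G₀}(G₁)`. -/
def disp : Subgroup G₁ :=
  Subgroup.closure {x | ∃ (g₀ : G₀) (g₁ : G₁), x = X.act g₀ g₁ * g₁⁻¹}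

lemma disp_gen_mem (g₀ : G₀) (g₁ : G₁) : X.act g₀ g₁ * g₁⁻¹ ∈ X.disp :=
  Subgroup.subset_closure ⟨g₀, g₁, rfl⟩

lemma d_fix_mem {g₁ : G₁} (h : g₁ ∈ X.fix) : X.d g₁ ∈ X.zstab := by
  refine Subgroup.mem_inf.mpr ⟨fun x => ?_, Subgroup.mem_center_iff.mpr fun g₀ => ?_⟩
  · rw [X.cm2, ← Subgroup.mem_center_iff.mp (X.fix_le_center h) x]
    simp
  · have h1 := X.cm1 g₀ g₁
    rw [h g₀] at h1
    exact mul_inv_eq_iff_eq_mul.mp h1.symm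

lemma d_disp_mem {x : G₁} (h : x ∈ X.disp) : X.d x ∈ commutator G₀ := by
  induction h using Subgroup.closure_induction with
  | mem y hy =>
      obtain ⟨g₀, g₁, rfl⟩ := hy
      have h2 : X.d (X.act g₀ g₁ * g₁⁻¹) = ⁅g₀, X.d g₁⁆ := by
        rw [map_mul, map_inv, X.cm1, commutatorElement_def]
      rw [h2]
      exact mem_commutator_of g₀ (X.d g₁)
  | one => simpa using (commutator G₀).one_mem
  | mul a b _ _ ha hb => rw [map_mul]; exact mul_mem ha hb
  | inv a _ ha => rw [map_inv]; exact inv_mem ha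

/-- The boundary map induced on central quotients. -/
def dbar : G₁ ⧸ X.fix →* G₀ ⧸ X.zstab :=
  QuotientGroup.map X.fix X.zstab X.d (fun _ h => X.d_fix_mem h)

/-- The boundary map restricted to the displacement/commutator subgroups. -/
def dres : X.disp →* commutator G₀ :=
  (X.d.domRestrict X.disp).codRestrict (commutator G₀) fun x => X.d_disp_mem x.2

variable {H₁ H₀ : Type*} [Group H₁] [Group H₀]

/-- Isoclinism of crossed modules. -/
def Isoclinic (X : XMod G₁ G₀) (Y : XMod H₁ H₀) : Prop :=
  ∃ (η₁ : (G₁ ⧸ X.fix) ≃* (H₁ ⧸ Y.fix))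
    (η₀ : (G₀ ⧸ X.zstab) ≃* (H₀ ⧸ Y.zstab))
    (ξ₁ : X.disp ≃* Y.disp)
    (ξ₀ : commutator G₀ ≃* commutator H₀),
    (∀ q : G₁ ⧸ X.fix, Y.dbar (η₁ q) = η₀ (X.dbar q)) ∧
    (∀ x : X.disp, Y.dres (ξ₁ x) = ξ₀ (X.dres x)) ∧
    (∀ (g₁ : G₁) (g₀ : G₀) (h₁ : H₁) (h₀ : H₀),
       η₁ (QuotientGroup.mk g₁) = QuotientGroup.mk h₁ →
       η₀ (QuotientGroup.mk g₀) = QuotientGroup.mk h₀ →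
       (ξ₁ ⟨X.act g₀ g₁ * g₁⁻¹, X.disp_gen_mem g₀ g₁⟩ : H₁) = Y.act h₀ h₁ * h₁⁻¹) ∧
    (∀ (g₀ g₀' : G₀) (h₀ h₀' : H₀),
       η₀ (QuotientGroup.mk g₀) = QuotientGroup.mk h₀ →
       η₀ (QuotientGroup.mk g₀') = QuotientGroup.mk h₀' →
       (ξ₀ ⟨⁅g₀, g₀'⁆, mem_commutator_of g₀ g₀'⟩ : H₀) = ⁅h₀, h₀'⁆)

end XMod

/-- Isoclinism of groups. -/
def IsoclinicGrp (M N : Type*) [Group M] [Group N] : Prop :=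
  ∃ (η : (M ⧸ Subgroup.center M) ≃* (N ⧸ Subgroup.center N))
    (ξ : commutator M ≃* commutator N),
    ∀ (x y : M) (u v : N),
      η (QuotientGroup.mk x) = QuotientGroup.mk u →
      η (QuotientGroup.mk y) = QuotientGroup.mk v →
      (ξ ⟨⁅x, y⁆, mem_commutator_of x y⟩ : N) = ⁅u, v⁆

/-!
By (CM2), `⁅g, g'⁆ = ^{d g}g' · g'⁻¹`, so `[G₁, G₁] ≤ D_{G₀}(G₁)`, and since `η₀` matches `d g`
with `d' h` whenever `η₁` matches `g` with `h`, condition (1) specialises to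
`ξ₁ ⁅g, g'⁆ = ⁅h, h'⁆`. So on both levels we have an isomorphism of quotients by central
subgroups and a commutator-compatible isomorphism of subgroups containing the derived subgroups.
Such a pair matches the centres (`g` is central iff all its commutators vanish, and `ξ` is
injective), hence descends to `G/Z(G) ≃ H/Z(H)`; and `ξ` restricts to `[G, G] ≃ [H, H]` because
both sides are generated by commutators that `ξ` matches.
-/

open QuotientGroup

section CentralQuotient

variable {G H : Type*} [Group G] [Group H]

lemma commutatorElement_mul_mem_center {z w : G} (hz : z ∈ Subgroup.center G)
    (hw : w ∈ Subgroup.center G) (u v : G) : ⁅u * z, v * w⁆ = ⁅u, v⁆ := by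
  rw [Subgroup.mem_center_iff] at hz hw
  calc ⁅u * z, v * w⁆ = u * (z * (v * w)) * z⁻¹ * u⁻¹ * w⁻¹ * v⁻¹ := by group
    _ = u * v * (w * u⁻¹) * w⁻¹ * v⁻¹ := by rw [← hz]; group
    _ = ⁅u, v⁆ := by rw [← hw]; group

lemma commutatorElement_eq_of_mk_eq {u v u' v' : G}
    (hu : (u : G ⧸ Subgroup.center G) = u') (hv : (v : G ⧸ Subgroup.center G) = v') :
    ⁅u, v⁆ = ⁅u', v'⁆ := by
  rw [← mul_inv_cancel_left u u', ← mul_inv_cancel_left v v']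
  exact (commutatorElement_mul_mem_center (QuotientGroup.eq.mp hu) (QuotientGroup.eq.mp hv)
    u v).symm

variable {A : Subgroup G} {B : Subgroup H} [A.Normal] [B.Normal] {K : Subgroup G} {L : Subgroup H}

lemma exists_mk_eq (e : G ⧸ A ≃* H ⧸ B) (g : G) : ∃ p : H, e g = p :=
  (mk_surjective (e g)).imp fun _ h => h.symm

/-- Condition (2) of an isoclinism, with the centres replaced by normal subgroups
`A`, `B` and the commutator subgroups by subgroups `K ⊇ [G, G]` and `L`. -/
def CommutatorCompatible (e : G ⧸ A ≃* H ⧸ B) (ξ : K ≃* L) (hK : commutator G ≤ K) : Prop :=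
  ∀ (g g' : G) (p p' : H), e g = p → e g' = p' →
    (ξ ⟨⁅g, g'⁆, hK (mem_commutator_of g g')⟩ : H) = ⁅p, p'⁆

namespace CommutatorCompatible

variable {e : G ⧸ A ≃* H ⧸ B} {ξ : K ≃* L} {hK : commutator G ≤ K}

lemma mem_center_iff (hξ : CommutatorCompatible e ξ hK) {g : G} {p : H} (hgp : e g = p) :
    g ∈ Subgroup.center G ↔ p ∈ Subgroup.center H := by
  have key : ∀ (g' : G) (p' : H), e g' = p' → (Commute g g' ↔ Commute p p') := fun g' p' hg'p' => by
    rw [← commutatorElement_eq_one_iff_commute, ← commutatorElement_eq_one_iff_commute,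
      ← hξ g g' p p' hgp hg'p', OneMemClass.coe_eq_one, map_eq_one_iff _ ξ.injective,
      Subgroup.mk_eq_one]
  simp only [Subgroup.mem_center_iff]
  constructor
  · intro hg p'
    obtain ⟨g', hg'⟩ := exists_mk_eq e.symm p'
    exact ((key g' p' (e.symm_apply_eq.mp hg').symm).mp (hg g').symm).symm
  · intro hp g'
    obtain ⟨p', hp'⟩ := exists_mk_eq e g'
    exact ((key g' p' hp').mpr (hp p').symm).symm

lemma exists_centerQuotient_equiv (hξ : CommutatorCompatible e ξ hK)
    (hB : B ≤ Subgroup.center H) :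
    ∃ η : G ⧸ Subgroup.center G ≃* H ⧸ Subgroup.center H,
      ∀ (g : G) (p : H), e g = p → η g = p := by
  let φ : G →* H ⧸ Subgroup.center H :=
    (map B (Subgroup.center H) (MonoidHom.id H) hB).comp (e.toMonoidHom.comp (mk' A))
  have hφ : ∀ (g : G) (p : H), e g = p → φ g = p := fun g p hgp => by
    simp only [φ, MonoidHom.comp_apply, MulEquiv.coe_toMonoidHom, mk'_apply, hgp]
    rfl
  have hker : φ.ker = Subgroup.center G := by
    ext g
    obtain ⟨p, hp⟩ := exists_mk_eq e g
    rw [MonoidHom.mem_ker, hφ g p hp, eq_one_iff, hξ.mem_center_iff hp]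
  have hsurj : Function.Surjective φ := fun y => by
    obtain ⟨p, rfl⟩ := mk_surjective y
    obtain ⟨g, hg⟩ := exists_mk_eq e.symm p
    exact ⟨g, hφ g p (e.symm_apply_eq.mp hg).symm⟩
  exact ⟨(quotientMulEquivOfEq hker.symm).trans (quotientKerEquivOfSurjective φ hsurj),
    fun g p hgp => hφ g p hgp⟩

lemma exists_commutator_equiv (hξ : CommutatorCompatible e ξ hK) :
    ∃ ξ' : commutator G ≃* commutator H, ∀ c, (ξ' c : H) = ξ (Subgroup.inclusion hK c) := by
  let ψ : commutator G →* H := L.subtype.comp (ξ.toMonoidHom.comp (Subgroup.inclusion hK))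
  have hψ : Function.Injective ψ :=
    L.subtype_injective.comp (ξ.injective.comp (Subgroup.inclusion_injective hK))
  have hrange : ψ.range = commutator H := by
    apply le_antisymm
    · have hcomm : commutator G ≤
          ((commutator H).comap (L.subtype.comp ξ.toMonoidHom)).map K.subtype := by
        rw [commutator_def, Subgroup.commutator_le]
        intro g _ g' _
        obtain ⟨p, hp⟩ := exists_mk_eq e g
        obtain ⟨p', hp'⟩ := exists_mk_eq e g'
        refine ⟨⟨⁅g, g'⁆, hK (mem_commutator_of g g')⟩, ?_, rfl⟩
        change (ξ ⟨⁅g, g'⁆, _⟩ : H) ∈ commutator H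
        rw [hξ g g' p p' hp hp']
        exact mem_commutator_of p p'
      rintro _ ⟨c, rfl⟩
      obtain ⟨k, hk, hkc⟩ := hcomm c.2
      rwa [← show Subgroup.inclusion hK c = k from Subtype.ext hkc.symm] at hk
    · rw [commutator_def, Subgroup.commutator_le]
      intro p _ p' _
      obtain ⟨g, hg⟩ := exists_mk_eq e.symm p
      obtain ⟨g', hg'⟩ := exists_mk_eq e.symm p'
      exact ⟨⟨⁅g, g'⁆, mem_commutator_of g g'⟩,
        hξ g g' p p' (e.symm_apply_eq.mp hg).symm (e.symm_apply_eq.mp hg').symm⟩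
  exact ⟨(MonoidHom.ofInjective hψ).trans (MulEquiv.subgroupCongr hrange), fun _ => rfl⟩

theorem isoclinicGrp (hξ : CommutatorCompatible e ξ hK) (hB : B ≤ Subgroup.center H) :
    IsoclinicGrp G H := by
  obtain ⟨η, hη⟩ := hξ.exists_centerQuotient_equiv hB
  obtain ⟨ξ', hξ'⟩ := hξ.exists_commutator_equiv
  refine ⟨η, ξ', fun x y u v hxu hyv => ?_⟩
  obtain ⟨u', hu'⟩ := exists_mk_eq e x
  obtain ⟨v', hv'⟩ := exists_mk_eq e y
  rw [hξ', commutatorElement_eq_of_mk_eq (hxu.symm.trans (hη x u' hu'))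
    (hyv.symm.trans (hη y v' hv'))]
  exact hξ x y u' v' hu' hv'

end CommutatorCompatible

end CentralQuotient

namespace XMod

variable {G₁ G₀ H₁ H₀ : Type*} [Group G₁] [Group G₀] [Group H₁] [Group H₀]

lemma commutatorElement_eq_act_d (X : XMod G₁ G₀) (g g' : G₁) :
    ⁅g, g'⁆ = X.act (X.d g) g' * g'⁻¹ := by
  rw [commutatorElement_def, X.cm2]

lemma commutator_le_disp (X : XMod G₁ G₀) : commutator G₁ ≤ X.disp := by
  rw [commutator_def, Subgroup.commutator_le]
  intro g _ g' _
  rw [X.commutatorElement_eq_act_d]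
  exact X.disp_gen_mem _ _

lemma dbar_mk (X : XMod G₁ G₀) (g : G₁) : X.dbar g = (X.d g : G₀ ⧸ X.zstab) := rfl

lemma commutatorCompatible_of_isoclinism {X : XMod G₁ G₀} {Y : XMod H₁ H₀}
    {η₁ : G₁ ⧸ X.fix ≃* H₁ ⧸ Y.fix} {η₀ : G₀ ⧸ X.zstab ≃* H₀ ⧸ Y.zstab} {ξ₁ : X.disp ≃* Y.disp}
    (hd : ∀ q : G₁ ⧸ X.fix, Y.dbar (η₁ q) = η₀ (X.dbar q))
    (hact : ∀ (g₁ : G₁) (g₀ : G₀) (h₁ : H₁) (h₀ : H₀), η₁ g₁ = h₁ → η₀ g₀ = h₀ →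
      (ξ₁ ⟨X.act g₀ g₁ * g₁⁻¹, X.disp_gen_mem g₀ g₁⟩ : H₁) = Y.act h₀ h₁ * h₁⁻¹) :
    CommutatorCompatible η₁ ξ₁ X.commutator_le_disp := by
  intro g g' p p' hgp hgp'
  have hd' : η₀ (X.d g) = Y.d p := by
    rw [← dbar_mk, ← hd, hgp, dbar_mk]
  simp only [X.commutatorElement_eq_act_d, Y.commutatorElement_eq_act_d]
  exact hact g' (X.d g) p' (Y.d p) hgp' hd'

end XMod

theorem isoclinicGrp_of_isoclinic_finite_general {G₁ G₀ H₁ H₀ : Type*}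
    [Group G₁] [Group G₀] [Group H₁] [Group H₀]
    (X : XMod G₁ G₀) (Y : XMod H₁ H₀) (h : X.Isoclinic Y) :
    IsoclinicGrp G₁ H₁ ∧ IsoclinicGrp G₀ H₀ := by
  obtain ⟨η₁, η₀, ξ₁, ξ₀, hd, -, hact, hcomm⟩ := h
  exact ⟨(XMod.commutatorCompatible_of_isoclinism hd hact).isoclinicGrp Y.fix_le_center,
    CommutatorCompatible.isoclinicGrp (hK := le_rfl) hcomm inf_le_right⟩

/-- if two finite crossed modules are isoclinic, then `G₁` is isoclinic
to `H₁` and `G₀` is isoclinic to `H₀` as groups. -/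
theorem isoclinicGrp_of_isoclinic_finite {G₁ G₀ H₁ H₀ : Type*}
    [Group G₁] [Group G₀] [Group H₁] [Group H₀]
    [Finite G₁] [Finite G₀] [Finite H₁] [Finite H₀]
    (X : XMod G₁ G₀) (Y : XMod H₁ H₀) (h : X.Isoclinic Y) :
    IsoclinicGrp G₁ H₁ ∧ IsoclinicGrp G₀ H₀ :=
  isoclinicGrp_of_isoclinic_finite_general X Y h
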